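/- G₂ acts transitively on coassociative 4-planes: if V and W are 4-dimensional real subspaces of ℝ⁷ such that φ₀(u₁,u₂,u₃) = 0 for all u₁,u₂,u₃ ∈ V and φ₀(w₁,w₂,w₃) = 0 for all w₁,w₂,w₃ ∈ W, then there exists an invertible linear map A : ℝ⁷ → ℝ⁷ with A*φ₀ = φ₀ and A(V) = W. -/

import Mathlib

open scoped RealInnerProductSpace

noncomputable section

/-- ℝ⁷ with its standard Euclidean inner product. -/
abbrev E7 := EuclideanSpace ℝ (Fin 7)

/-- The coordinate 3-form dx_i ∧ dx_j ∧ dx_k on ℝ⁷ (indices 0,…,6 for x₁,…,x₇). -/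
def tri7 (i j k : Fin 7) (u v w : E7) : ℝ :=
  Matrix.det !![u i, u j, u k; v i, v j, v k; w i, w j, w k]

/-- The G₂ 3-form φ₀ = dx₁₂₃ + dx₁₄₅ + dx₁₆₇ + dx₂₄₆ − dx₂₅₇ − dx₃₄₇ − dx₃₅₆. -/
def phi0 (u v w : E7) : ℝ :=
  tri7 0 1 2 u v w + tri7 0 3 4 u v w + tri7 0 5 6 u v w + tri7 1 3 5 u v w
    - tri7 1 4 6 u v w - tri7 2 3 6 u v w - tri7 2 4 5 u v w

/-! ### The seven-dimensional cross product associated to φ₀ -/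

def cross (u v : E7) : E7 :=
  WithLp.toLp 2 (![u 1 * v 2 - u 2 * v 1 + u 3 * v 4 - u 4 * v 3 + u 5 * v 6 - u 6 * v 5,
    -(u 0 * v 2) + u 2 * v 0 + u 3 * v 5 - u 4 * v 6 - u 5 * v 3 + u 6 * v 4,
    u 0 * v 1 - u 1 * v 0 - u 3 * v 6 - u 4 * v 5 + u 5 * v 4 + u 6 * v 3,
    -(u 0 * v 4) - u 1 * v 5 + u 2 * v 6 + u 4 * v 0 + u 5 * v 1 - u 6 * v 2,
    u 0 * v 3 + u 1 * v 6 + u 2 * v 5 - u 3 * v 0 - u 5 * v 2 - u 6 * v 1,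
    -(u 0 * v 6) + u 1 * v 3 - u 2 * v 4 - u 3 * v 1 + u 4 * v 2 + u 6 * v 0,
    u 0 * v 5 - u 1 * v 4 - u 2 * v 3 + u 3 * v 2 + u 4 * v 1 - u 5 * v 0])

lemma cross_apply_0 (u v : E7) : cross u v 0 = u 1 * v 2 - u 2 * v 1 + u 3 * v 4 - u 4 * v 3 + u 5 * v 6 - u 6 * v 5 := rfl
lemma cross_apply_1 (u v : E7) : cross u v 1 = -(u 0 * v 2) + u 2 * v 0 + u 3 * v 5 - u 4 * v 6 - u 5 * v 3 + u 6 * v 4 := rfl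
lemma cross_apply_2 (u v : E7) : cross u v 2 = u 0 * v 1 - u 1 * v 0 - u 3 * v 6 - u 4 * v 5 + u 5 * v 4 + u 6 * v 3 := rfl
lemma cross_apply_3 (u v : E7) : cross u v 3 = -(u 0 * v 4) - u 1 * v 5 + u 2 * v 6 + u 4 * v 0 + u 5 * v 1 - u 6 * v 2 := rfl
lemma cross_apply_4 (u v : E7) : cross u v 4 = u 0 * v 3 + u 1 * v 6 + u 2 * v 5 - u 3 * v 0 - u 5 * v 2 - u 6 * v 1 := rfl
lemma cross_apply_5 (u v : E7) : cross u v 5 = -(u 0 * v 6) + u 1 * v 3 - u 2 * v 4 - u 3 * v 1 + u 4 * v 2 + u 6 * v 0 := rfl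
lemma cross_apply_6 (u v : E7) : cross u v 6 = u 0 * v 5 - u 1 * v 4 - u 2 * v 3 + u 3 * v 2 + u 4 * v 1 - u 5 * v 0 := rfl

lemma inner7 (x y : E7) : ⟪x, y⟫ = x 0 * y 0 + x 1 * y 1 + x 2 * y 2 + x 3 * y 3 + x 4 * y 4 + x 5 * y 5 + x 6 * y 6 := by
  simp [PiLp.inner_apply, RCLike.inner_apply, Fin.sum_univ_seven]
  ring

lemma E7_ext {x y : E7} (h0 : x 0 = y 0) (h1 : x 1 = y 1) (h2 : x 2 = y 2) (h3 : x 3 = y 3)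
    (h4 : x 4 = y 4) (h5 : x 5 = y 5) (h6 : x 6 = y 6) : x = y := by
  apply PiLp.ext; intro i
  fin_cases i <;> assumption

lemma Fin7_forall {P : Fin 7 → Prop} (h0 : P 0) (h1 : P 1) (h2 : P 2) (h3 : P 3)
    (h4 : P 4) (h5 : P 5) (h6 : P 6) : ∀ i, P i := by
  intro i
  fin_cases i <;> assumption

attribute [local simp] cross_apply_0 cross_apply_1 cross_apply_2 cross_apply_3
  cross_apply_4 cross_apply_5 cross_apply_6 PiLp.add_apply PiLp.sub_apply PiLp.smul_apply
  PiLp.neg_apply PiLp.zero_apply smul_eq_mul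

lemma phi0_eq (u v w : E7) : phi0 u v w = ⟪cross u v, w⟫ := by
  simp only [phi0, tri7, Matrix.det_fin_three, inner7]
  simp
  ring

lemma phi0_add1 (x x' y z : E7) : phi0 (x + x') y z = phi0 x y z + phi0 x' y z := by
  simp only [phi0, tri7, Matrix.det_fin_three]; simp; ring

lemma phi0_add2 (x y y' z : E7) : phi0 x (y + y') z = phi0 x y z + phi0 x y' z := by
  simp only [phi0, tri7, Matrix.det_fin_three]; simp; ring

lemma phi0_add3 (x y z z' : E7) : phi0 x y (z + z') = phi0 x y z + phi0 x y z' := by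
  simp only [phi0, tri7, Matrix.det_fin_three]; simp; ring

lemma phi0_smul1 (r : ℝ) (x y z : E7) : phi0 (r • x) y z = r * phi0 x y z := by
  simp only [phi0, tri7, Matrix.det_fin_three]; simp; ring

lemma phi0_smul2 (r : ℝ) (x y z : E7) : phi0 x (r • y) z = r * phi0 x y z := by
  simp only [phi0, tri7, Matrix.det_fin_three]; simp; ring

lemma phi0_smul3 (r : ℝ) (x y z : E7) : phi0 x y (r • z) = r * phi0 x y z := by
  simp only [phi0, tri7, Matrix.det_fin_three]; simp; ring

lemma cross_anti (x y : E7) : cross x y = -cross y x := by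
  apply E7_ext <;> · simp; ring

lemma cross_self7 (x : E7) : cross x x = 0 := by
  apply E7_ext <;> · simp; ring

lemma cross_neg_left (x y : E7) : cross (-x) y = -cross x y := by
  apply E7_ext <;> · simp; ring

lemma cross_neg_right (x y : E7) : cross x (-y) = -cross x y := by
  apply E7_ext <;> · simp; ring

lemma inner_cross_left (x y : E7) : ⟪cross x y, x⟫ = 0 := by
  simp only [inner7]; simp; ring

lemma inner_cross_right (x y : E7) : ⟪cross x y, y⟫ = 0 := by
  simp only [inner7]; simp; ring

lemma inner_cross_swap (x y z : E7) : ⟪cross x y, z⟫ = -⟪cross x z, y⟫ := by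
  simp only [inner7]; simp; ring

lemma inner_cross_cyc (x y z : E7) : ⟪cross x y, z⟫ = ⟪cross y z, x⟫ := by
  simp only [inner7]; simp; ring

lemma inner_cross_cross_left (x y z : E7) :
    ⟪cross x y, cross x z⟫ = ⟪x,x⟫ * ⟪y,z⟫ - ⟪x,y⟫ * ⟪x,z⟫ := by
  simp only [inner7]; simp; ring

lemma inner_cross_cross_right (x y z : E7) :
    ⟪cross x z, cross y z⟫ = ⟪z,z⟫ * ⟪x,y⟫ - ⟪z,x⟫ * ⟪z,y⟫ := by
  simp only [inner7]; simp; ring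

lemma cross_cross_left (x y : E7) : cross (cross x y) x = ⟪x,x⟫ • y - ⟪x,y⟫ • x := by
  apply E7_ext <;> · simp only [inner7]; simp; ring

lemma cross_cross_right (x y : E7) : cross (cross x y) y = ⟪x,y⟫ • y - ⟪y,y⟫ • x := by
  apply E7_ext <;> · simp only [inner7]; simp; ring

lemma cross_left_cross (x y : E7) : cross x (cross x y) = ⟪x,y⟫ • x - ⟪x,x⟫ • y := by
  apply E7_ext <;> · simp only [inner7]; simp; ring

set_option maxHeartbeats 1000000 in
lemma I3L (x y z : E7) : cross x (cross y z) =
    (2*⟪x,z⟫) • y - ⟪x,y⟫ • z - ⟪y,z⟫ • x - cross (cross x y) z := by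
  apply E7_ext <;> · simp only [inner7]; simp; ring

set_option maxHeartbeats 1000000 in
lemma I3R (x y z : E7) : cross (cross x y) z =
    (2*⟪x,z⟫) • y - ⟪x,y⟫ • z - ⟪y,z⟫ • x - cross x (cross y z) := by
  apply E7_ext <;> · simp only [inner7]; simp; ring
def eps7 : Fin 7 → Fin 7 → ℝ :=
  ![![(0), (1), (-1), (1), (-1), (1), (-1)],
    ![(-1), (0), (1), (1), (-1), (-1), (1)],
    ![(1), (-1), (0), (-1), (-1), (1), (1)],
    ![(-1), (-1), (1), (0), (1), (1), (-1)],
    ![(1), (1), (1), (-1), (0), (-1), (-1)],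
    ![(-1), (1), (-1), (-1), (1), (0), (1)],
    ![(1), (-1), (-1), (1), (1), (-1), (0)]]

def sig7 : Fin 7 → Fin 7 → Fin 7 :=
  ![![0, 2, 1, 4, 3, 6, 5],
    ![2, 0, 0, 5, 6, 3, 4],
    ![1, 0, 0, 6, 5, 4, 3],
    ![4, 5, 6, 0, 0, 1, 2],
    ![3, 6, 5, 0, 0, 2, 1],
    ![6, 3, 4, 1, 2, 0, 0],
    ![5, 4, 3, 2, 1, 0, 0]]

def stdC (i j k : Fin 7) : ℝ := eps7 i j * (if sig7 i j = k then 1 else 0)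

set_option maxHeartbeats 2000000 in
lemma cayley (u v w : E7) (hu : ⟪u,u⟫ = 1) (hv : ⟪v,v⟫ = 1) (hw : ⟪w,w⟫ = 1)
    (huv : ⟪u,v⟫ = 0) (huw : ⟪u,w⟫ = 0) (hvw : ⟪v,w⟫ = 0)
    (hfuvw : ⟪cross u v, w⟫ = 0) :
    ∃ f : Fin 7 → E7, Orthonormal ℝ f ∧
      (∀ i j k, phi0 (f i) (f j) (f k) = stdC i j k) ∧
      f 0 = cross u v ∧ f 1 = cross u w ∧ f 2 = -cross v w ∧
      f 3 = u ∧ f 4 = v ∧ f 5 = w ∧ f 6 = cross (cross u v) w := by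

  have hvu : ⟪v,u⟫ = 0 := by rw [real_inner_comm]; exact huv
  have hwu : ⟪w,u⟫ = 0 := by rw [real_inner_comm]; exact huw
  have hwv : ⟪w,v⟫ = 0 := by rw [real_inner_comm]; exact hvw
  have iau : ⟪cross u v, u⟫ = 0 := inner_cross_left u v
  have iav : ⟪cross u v, v⟫ = 0 := inner_cross_right u v
  have ibu : ⟪cross u w, u⟫ = 0 := inner_cross_left u w
  have ibw : ⟪cross u w, w⟫ = 0 := inner_cross_right u w
  have ibv : ⟪cross u w, v⟫ = 0 := by rw [inner_cross_swap, hfuvw]; ring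
  have icv : ⟪cross v w, v⟫ = 0 := inner_cross_left v w
  have icw : ⟪cross v w, w⟫ = 0 := inner_cross_right v w
  have icu : ⟪cross v w, u⟫ = 0 := by rw [← inner_cross_cyc u v w]; exact hfuvw
  have iaa : ⟪cross u v, cross u v⟫ = 1 := by rw [inner_cross_cross_left, hu, hv, huv]; ring
  have ibb : ⟪cross u w, cross u w⟫ = 1 := by rw [inner_cross_cross_left, hu, hw, huw]; ring
  have icc : ⟪cross v w, cross v w⟫ = 1 := by rw [inner_cross_cross_left, hv, hw, hvw]; ring
  have iab : ⟪cross u v, cross u w⟫ = 0 := by rw [inner_cross_cross_left, hvw, huv]; ring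
  have iac : ⟪cross u v, cross v w⟫ = 0 := by
    rw [cross_anti u v, inner_neg_left, inner_cross_cross_left, huw, hvw]; ring
  have ibc : ⟪cross u w, cross v w⟫ = 0 := by
    rw [inner_cross_cross_right, huv, hwv]; ring
  have iua : ⟪u, cross u v⟫ = 0 := by rw [real_inner_comm]; exact iau
  have iva : ⟪v, cross u v⟫ = 0 := by rw [real_inner_comm]; exact iav
  have iba : ⟪cross u w, cross u v⟫ = 0 := by rw [real_inner_comm]; exact iab
  have ica : ⟪cross v w, cross u v⟫ = 0 := by rw [real_inner_comm]; exact iac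
  have P1 : cross (cross u v) u = v := by rw [cross_cross_left, hu, huv]; simp
  have P2 : cross (cross u v) v = -u := by rw [cross_cross_right, huv, hv]; simp
  have P3 : cross (cross u w) u = w := by rw [cross_cross_left, hu, huw]; simp
  have P4 : cross (cross u w) w = -u := by rw [cross_cross_right, huw, hw]; simp
  have P5 : cross (cross v w) v = w := by rw [cross_cross_left, hv, hvw]; simp
  have P6 : cross (cross v w) w = -v := by rw [cross_cross_right, hvw, hw]; simp
  have Q1 : cross u (cross v w) = -cross (cross u v) w := by
    rw [I3L, huw, huv, hvw]; simp
  have Q2 : cross v (cross u w) = cross (cross u v) w := by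
    rw [I3L, hvw, hvu, huw, cross_anti v u, cross_neg_left]; simp
  have P7 : cross (cross u v) (cross u w) = -cross v w := by
    rw [I3L, hfuvw, iau, huw, P1]; simp
  have P8 : cross (cross u w) v = -cross (cross u v) w := by
    rw [I3R, huv, huw, hwv, cross_anti w v, cross_neg_right, Q1]; simp
  have P9 : cross (cross v w) u = cross (cross u v) w := by
    rw [I3R, hvu, hvw, hwu, cross_anti w u, cross_neg_right, Q2]; simp
  have hua : cross u (cross u v) = -v := by rw [cross_left_cross, huv, hu]; simp
  have hva : cross v (cross u v) = u := by
    rw [cross_anti u v, cross_neg_right, cross_left_cross, hvu, hv]; simp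
  have P10 : cross u (cross (cross u v) w) = cross v w := by
    rw [I3L, huw, iua, hfuvw, hua, cross_neg_left]; simp
  have P11 : cross v (cross (cross u v) w) = -cross u w := by
    rw [I3L, hvw, iva, hfuvw, hva]; simp
  have P12 : cross w (cross (cross u v) w) = cross u v := by
    rw [cross_anti, cross_cross_right, hfuvw, hw]; simp
  have hdw : cross (cross (cross u v) w) w = -cross u v := by
    rw [cross_cross_right, hfuvw, hw]; simp
  have P13 : cross (cross u v) (cross v w) = cross u w := by
    rw [I3L, hfuvw, iav, hvw, P2, cross_neg_left]; simp
  have P14 : cross (cross u w) (cross v w) = -cross u v := by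
    rw [I3L, ibw, ibv, hvw, P8, cross_neg_left, hdw]; simp
  have P15 : cross (cross u v) (cross (cross u v) w) = -w := by
    rw [cross_left_cross, hfuvw, iaa]; simp
  have P16 : cross (cross u w) (cross (cross u v) w) = v := by
    rw [I3L, ibw, iba, hfuvw,
      cross_anti (cross u w) (cross u v), P7, cross_neg_left, cross_neg_left, neg_neg,
      cross_cross_right, hvw, hw]; simp
  have P17 : cross (cross v w) (cross (cross u v) w) = -u := by
    rw [I3L, icw, ica, hfuvw,
      cross_anti (cross v w) (cross u v), P13, cross_neg_left, P4]; simp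
  have idd : ⟪cross (cross u v) w, cross (cross u v) w⟫ = 1 := by
    rw [inner_cross_cross_left, iaa, hw, hfuvw]; ring
  have ida : ⟪cross (cross u v) w, cross u v⟫ = 0 := inner_cross_left (cross u v) w
  have idw : ⟪cross (cross u v) w, w⟫ = 0 := inner_cross_right (cross u v) w
  have idu : ⟪cross (cross u v) w, u⟫ = 0 := by
    rw [inner_cross_swap, cross_cross_left, inner_sub_left, real_inner_smul_left,
      real_inner_smul_left, hu, huv, hvw]; ring
  have idv : ⟪cross (cross u v) w, v⟫ = 0 := by
    rw [inner_cross_swap, cross_cross_right, inner_sub_left, real_inner_smul_left,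
      real_inner_smul_left, huv, hv, hvw, huw]; ring
  have idb : ⟪cross (cross u v) w, cross u w⟫ = 0 := by
    rw [inner_cross_swap, P7, inner_neg_left, icw]; ring
  have idc : ⟪cross (cross u v) w, cross v w⟫ = 0 := by
    rw [inner_cross_swap, P13, ibw]; ring
  have gram : ∀ i j, ⟪(![cross u v, cross u w, -cross v w, u, v, w, cross (cross u v) w] : Fin 7 → E7) i, (![cross u v, cross u w, -cross v w, u, v, w, cross (cross u v) w] : Fin 7 → E7) j⟫ = if i = j then (1:ℝ) else 0 := by
    refine Fin7_forall ?_ ?_ ?_ ?_ ?_ ?_ ?_ <;> refine Fin7_forall ?_ ?_ ?_ ?_ ?_ ?_ ?_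
    · show ⟪cross u v, cross u v⟫ = (1:ℝ)
      exact iaa
    · show ⟪cross u v, cross u w⟫ = (0:ℝ)
      simp [inner_neg_left, inner_neg_right, iab]
    · show ⟪cross u v, -cross v w⟫ = (0:ℝ)
      simp [inner_neg_left, inner_neg_right, iac]
    · show ⟪cross u v, u⟫ = (0:ℝ)
      simp [inner_neg_left, inner_neg_right, iau]
    · show ⟪cross u v, v⟫ = (0:ℝ)
      simp [inner_neg_left, inner_neg_right, iav]
    · show ⟪cross u v, w⟫ = (0:ℝ)
      simp [inner_neg_left, inner_neg_right, hfuvw]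
    · show ⟪cross u v, cross (cross u v) w⟫ = (0:ℝ)
      rw [real_inner_comm]; simp [inner_neg_left, inner_neg_right, ida]
    · show ⟪cross u w, cross u v⟫ = (0:ℝ)
      rw [real_inner_comm]; simp [inner_neg_left, inner_neg_right, iab]
    · show ⟪cross u w, cross u w⟫ = (1:ℝ)
      exact ibb
    · show ⟪cross u w, -cross v w⟫ = (0:ℝ)
      simp [inner_neg_left, inner_neg_right, ibc]
    · show ⟪cross u w, u⟫ = (0:ℝ)
      simp [inner_neg_left, inner_neg_right, ibu]
    · show ⟪cross u w, v⟫ = (0:ℝ)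
      simp [inner_neg_left, inner_neg_right, ibv]
    · show ⟪cross u w, w⟫ = (0:ℝ)
      simp [inner_neg_left, inner_neg_right, ibw]
    · show ⟪cross u w, cross (cross u v) w⟫ = (0:ℝ)
      rw [real_inner_comm]; simp [inner_neg_left, inner_neg_right, idb]
    · show ⟪-cross v w, cross u v⟫ = (0:ℝ)
      rw [real_inner_comm]; simp [inner_neg_left, inner_neg_right, iac]
    · show ⟪-cross v w, cross u w⟫ = (0:ℝ)
      rw [real_inner_comm]; simp [inner_neg_left, inner_neg_right, ibc]
    · show ⟪-cross v w, -cross v w⟫ = (1:ℝ)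
      rw [inner_neg_left, inner_neg_right, neg_neg]; exact icc
    · show ⟪-cross v w, u⟫ = (0:ℝ)
      simp [inner_neg_left, inner_neg_right, icu]
    · show ⟪-cross v w, v⟫ = (0:ℝ)
      simp [inner_neg_left, inner_neg_right, icv]
    · show ⟪-cross v w, w⟫ = (0:ℝ)
      simp [inner_neg_left, inner_neg_right, icw]
    · show ⟪-cross v w, cross (cross u v) w⟫ = (0:ℝ)
      rw [real_inner_comm]; simp [inner_neg_left, inner_neg_right, idc]
    · show ⟪u, cross u v⟫ = (0:ℝ)
      rw [real_inner_comm]; simp [inner_neg_left, inner_neg_right, iau]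
    · show ⟪u, cross u w⟫ = (0:ℝ)
      rw [real_inner_comm]; simp [inner_neg_left, inner_neg_right, ibu]
    · show ⟪u, -cross v w⟫ = (0:ℝ)
      rw [real_inner_comm]; simp [inner_neg_left, inner_neg_right, icu]
    · show ⟪u, u⟫ = (1:ℝ)
      exact hu
    · show ⟪u, v⟫ = (0:ℝ)
      simp [inner_neg_left, inner_neg_right, huv]
    · show ⟪u, w⟫ = (0:ℝ)
      simp [inner_neg_left, inner_neg_right, huw]
    · show ⟪u, cross (cross u v) w⟫ = (0:ℝ)
      rw [real_inner_comm]; simp [inner_neg_left, inner_neg_right, idu]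
    · show ⟪v, cross u v⟫ = (0:ℝ)
      rw [real_inner_comm]; simp [inner_neg_left, inner_neg_right, iav]
    · show ⟪v, cross u w⟫ = (0:ℝ)
      rw [real_inner_comm]; simp [inner_neg_left, inner_neg_right, ibv]
    · show ⟪v, -cross v w⟫ = (0:ℝ)
      rw [real_inner_comm]; simp [inner_neg_left, inner_neg_right, icv]
    · show ⟪v, u⟫ = (0:ℝ)
      rw [real_inner_comm]; simp [inner_neg_left, inner_neg_right, huv]
    · show ⟪v, v⟫ = (1:ℝ)
      exact hv
    · show ⟪v, w⟫ = (0:ℝ)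
      simp [inner_neg_left, inner_neg_right, hvw]
    · show ⟪v, cross (cross u v) w⟫ = (0:ℝ)
      rw [real_inner_comm]; simp [inner_neg_left, inner_neg_right, idv]
    · show ⟪w, cross u v⟫ = (0:ℝ)
      rw [real_inner_comm]; simp [inner_neg_left, inner_neg_right, hfuvw]
    · show ⟪w, cross u w⟫ = (0:ℝ)
      rw [real_inner_comm]; simp [inner_neg_left, inner_neg_right, ibw]
    · show ⟪w, -cross v w⟫ = (0:ℝ)
      rw [real_inner_comm]; simp [inner_neg_left, inner_neg_right, icw]
    · show ⟪w, u⟫ = (0:ℝ)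
      rw [real_inner_comm]; simp [inner_neg_left, inner_neg_right, huw]
    · show ⟪w, v⟫ = (0:ℝ)
      rw [real_inner_comm]; simp [inner_neg_left, inner_neg_right, hvw]
    · show ⟪w, w⟫ = (1:ℝ)
      exact hw
    · show ⟪w, cross (cross u v) w⟫ = (0:ℝ)
      rw [real_inner_comm]; simp [inner_neg_left, inner_neg_right, idw]
    · show ⟪cross (cross u v) w, cross u v⟫ = (0:ℝ)
      simp [inner_neg_left, inner_neg_right, ida]
    · show ⟪cross (cross u v) w, cross u w⟫ = (0:ℝ)
      simp [inner_neg_left, inner_neg_right, idb]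
    · show ⟪cross (cross u v) w, -cross v w⟫ = (0:ℝ)
      simp [inner_neg_left, inner_neg_right, idc]
    · show ⟪cross (cross u v) w, u⟫ = (0:ℝ)
      simp [inner_neg_left, inner_neg_right, idu]
    · show ⟪cross (cross u v) w, v⟫ = (0:ℝ)
      simp [inner_neg_left, inner_neg_right, idv]
    · show ⟪cross (cross u v) w, w⟫ = (0:ℝ)
      simp [inner_neg_left, inner_neg_right, idw]
    · show ⟪cross (cross u v) w, cross (cross u v) w⟫ = (1:ℝ)
      exact idd
  have hprod : ∀ i j, cross ((![cross u v, cross u w, -cross v w, u, v, w, cross (cross u v) w] : Fin 7 → E7) i) ((![cross u v, cross u w, -cross v w, u, v, w, cross (cross u v) w] : Fin 7 → E7) j) = eps7 i j • (![cross u v, cross u w, -cross v w, u, v, w, cross (cross u v) w] : Fin 7 → E7) (sig7 i j) := by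
    refine Fin7_forall ?_ ?_ ?_ ?_ ?_ ?_ ?_ <;> refine Fin7_forall ?_ ?_ ?_ ?_ ?_ ?_ ?_
    · show cross (cross u v) (cross u v) = (0:ℝ) • (cross u v)
      rw [cross_self7]; simp
    · show cross (cross u v) (cross u w) = (1:ℝ) • (-cross v w)
      rw [P7]; simp
    · show cross (cross u v) (-cross v w) = ((-1):ℝ) • (cross u w)
      rw [cross_neg_right, P13]; simp
    · show cross (cross u v) (u) = (1:ℝ) • (v)
      rw [P1]; simp
    · show cross (cross u v) (v) = ((-1):ℝ) • (u)
      rw [P2]; simp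
    · show cross (cross u v) (w) = (1:ℝ) • (cross (cross u v) w)
      simp
    · show cross (cross u v) (cross (cross u v) w) = ((-1):ℝ) • (w)
      rw [P15]; simp
    · show cross (cross u w) (cross u v) = ((-1):ℝ) • (-cross v w)
      rw [cross_anti (cross u w) (cross u v), P7]; simp
    · show cross (cross u w) (cross u w) = (0:ℝ) • (cross u v)
      rw [cross_self7]; simp
    · show cross (cross u w) (-cross v w) = (1:ℝ) • (cross u v)
      rw [cross_neg_right, P14]; simp
    · show cross (cross u w) (u) = (1:ℝ) • (w)
      rw [P3]; simp
    · show cross (cross u w) (v) = ((-1):ℝ) • (cross (cross u v) w)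
      rw [P8]; simp
    · show cross (cross u w) (w) = ((-1):ℝ) • (u)
      rw [P4]; simp
    · show cross (cross u w) (cross (cross u v) w) = (1:ℝ) • (v)
      rw [P16]; simp
    · show cross (-cross v w) (cross u v) = (1:ℝ) • (cross u w)
      rw [cross_anti (-cross v w) (cross u v), cross_neg_right, P13]; simp
    · show cross (-cross v w) (cross u w) = ((-1):ℝ) • (cross u v)
      rw [cross_anti (-cross v w) (cross u w), cross_neg_right, P14]; simp
    · show cross (-cross v w) (-cross v w) = (0:ℝ) • (cross u v)
      rw [cross_self7]; simp
    · show cross (-cross v w) (u) = ((-1):ℝ) • (cross (cross u v) w)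
      rw [cross_neg_left, P9]; simp
    · show cross (-cross v w) (v) = ((-1):ℝ) • (w)
      rw [cross_neg_left, P5]; simp
    · show cross (-cross v w) (w) = (1:ℝ) • (v)
      rw [cross_neg_left, P6]; simp
    · show cross (-cross v w) (cross (cross u v) w) = (1:ℝ) • (u)
      rw [cross_neg_left, P17]; simp
    · show cross (u) (cross u v) = ((-1):ℝ) • (v)
      rw [cross_anti (u) (cross u v), P1]; simp
    · show cross (u) (cross u w) = ((-1):ℝ) • (w)
      rw [cross_anti (u) (cross u w), P3]; simp
    · show cross (u) (-cross v w) = (1:ℝ) • (cross (cross u v) w)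
      rw [cross_anti (u) (-cross v w), cross_neg_left, P9]; simp
    · show cross (u) (u) = (0:ℝ) • (cross u v)
      rw [cross_self7]; simp
    · show cross (u) (v) = (1:ℝ) • (cross u v)
      simp
    · show cross (u) (w) = (1:ℝ) • (cross u w)
      simp
    · show cross (u) (cross (cross u v) w) = ((-1):ℝ) • (-cross v w)
      rw [P10]; simp
    · show cross (v) (cross u v) = (1:ℝ) • (u)
      rw [cross_anti (v) (cross u v), P2]; simp
    · show cross (v) (cross u w) = (1:ℝ) • (cross (cross u v) w)
      rw [cross_anti (v) (cross u w), P8]; simp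
    · show cross (v) (-cross v w) = (1:ℝ) • (w)
      rw [cross_anti (v) (-cross v w), cross_neg_left, P5]; simp
    · show cross (v) (u) = ((-1):ℝ) • (cross u v)
      rw [cross_anti (v) (u)]; simp
    · show cross (v) (v) = (0:ℝ) • (cross u v)
      rw [cross_self7]; simp
    · show cross (v) (w) = ((-1):ℝ) • (-cross v w)
      simp
    · show cross (v) (cross (cross u v) w) = ((-1):ℝ) • (cross u w)
      rw [P11]; simp
    · show cross (w) (cross u v) = ((-1):ℝ) • (cross (cross u v) w)
      rw [cross_anti (w) (cross u v)]; simp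
    · show cross (w) (cross u w) = (1:ℝ) • (u)
      rw [cross_anti (w) (cross u w), P4]; simp
    · show cross (w) (-cross v w) = ((-1):ℝ) • (v)
      rw [cross_anti (w) (-cross v w), cross_neg_left, P6]; simp
    · show cross (w) (u) = ((-1):ℝ) • (cross u w)
      rw [cross_anti (w) (u)]; simp
    · show cross (w) (v) = (1:ℝ) • (-cross v w)
      rw [cross_anti (w) (v)]; simp
    · show cross (w) (w) = (0:ℝ) • (cross u v)
      rw [cross_self7]; simp
    · show cross (w) (cross (cross u v) w) = (1:ℝ) • (cross u v)
      rw [P12]; simp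
    · show cross (cross (cross u v) w) (cross u v) = (1:ℝ) • (w)
      rw [cross_anti (cross (cross u v) w) (cross u v), P15]; simp
    · show cross (cross (cross u v) w) (cross u w) = ((-1):ℝ) • (v)
      rw [cross_anti (cross (cross u v) w) (cross u w), P16]; simp
    · show cross (cross (cross u v) w) (-cross v w) = ((-1):ℝ) • (u)
      rw [cross_anti (cross (cross u v) w) (-cross v w), cross_neg_left, P17]; simp
    · show cross (cross (cross u v) w) (u) = (1:ℝ) • (-cross v w)
      rw [cross_anti (cross (cross u v) w) (u), P10]; simp
    · show cross (cross (cross u v) w) (v) = (1:ℝ) • (cross u w)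
      rw [cross_anti (cross (cross u v) w) (v), P11]; simp
    · show cross (cross (cross u v) w) (w) = ((-1):ℝ) • (cross u v)
      rw [cross_anti (cross (cross u v) w) (w), P12]; simp
    · show cross (cross (cross u v) w) (cross (cross u v) w) = (0:ℝ) • (cross u v)
      rw [cross_self7]; simp
  refine ⟨(![cross u v, cross u w, -cross v w, u, v, w, cross (cross u v) w] : Fin 7 → E7), orthonormal_iff_ite.mpr gram, ?_, rfl, rfl, rfl, rfl, rfl, rfl, rfl⟩
  intro i j k
  rw [phi0_eq, hprod i j, real_inner_smul_left, gram]
  rfl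

/-! ### Multilinearity of φ₀ over sums -/

lemma phi0_zero1 (y z : E7) : phi0 0 y z = 0 := by
  simp only [phi0, tri7, Matrix.det_fin_three]; simp

lemma phi0_zero2 (y z : E7) : phi0 y 0 z = 0 := by
  simp only [phi0, tri7, Matrix.det_fin_three]; simp

lemma phi0_zero3 (y z : E7) : phi0 y z 0 = 0 := by
  simp only [phi0, tri7, Matrix.det_fin_three]; simp

lemma phi0_sum1 {ι : Type*} (s : Finset ι) (p : ι → E7) (y z : E7) :
    phi0 (∑ i ∈ s, p i) y z = ∑ i ∈ s, phi0 (p i) y z := by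
  induction s using Finset.cons_induction with
  | empty => simpa using phi0_zero1 y z
  | cons a s ha ih => rw [Finset.sum_cons, phi0_add1, ih, Finset.sum_cons]

lemma phi0_sum2 {ι : Type*} (s : Finset ι) (p : ι → E7) (y z : E7) :
    phi0 y (∑ i ∈ s, p i) z = ∑ i ∈ s, phi0 y (p i) z := by
  induction s using Finset.cons_induction with
  | empty => simpa using phi0_zero2 y z
  | cons a s ha ih => rw [Finset.sum_cons, phi0_add2, ih, Finset.sum_cons]

lemma phi0_sum3 {ι : Type*} (s : Finset ι) (p : ι → E7) (y z : E7) :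
    phi0 y z (∑ i ∈ s, p i) = ∑ i ∈ s, phi0 y z (p i) := by
  induction s using Finset.cons_induction with
  | empty => simpa using phi0_zero3 y z
  | cons a s ha ih => rw [Finset.sum_cons, phi0_add3, ih, Finset.sum_cons]

lemma phi0_expand_sum (c d e : Fin 7 → ℝ) (p q r : Fin 7 → E7) :
    phi0 (∑ i, c i • p i) (∑ j, d j • q j) (∑ k, e k • r k)
      = ∑ k, ∑ j, ∑ i, e k * (d j * (c i * phi0 (p i) (q j) (r k))) := by
  simp only [phi0_sum1, phi0_smul1, phi0_sum2, phi0_smul2, phi0_sum3, phi0_smul3,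
    Finset.mul_sum]

lemma Fin3_forall {P : Fin 3 → Prop} (h0 : P 0) (h1 : P 1) (h2 : P 2) : ∀ i, P i := by
  intro i
  fin_cases i <;> assumption

/-! ### A Cayley basis adapted to a coassociative subspace -/

lemma cayley_subspace (V : Submodule ℝ E7) (hV : Module.finrank ℝ V = 4)
    (hVphi : ∀ u v w : E7, u ∈ V → v ∈ V → w ∈ V → phi0 u v w = 0) :
    ∃ f : Fin 7 → E7, Orthonormal ℝ f ∧ (∀ i j k, phi0 (f i) (f j) (f k) = stdC i j k) ∧
      V = Submodule.span ℝ (Set.range fun i : Fin 4 => f (Fin.natAdd 3 i)) := by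
  classical
  let B := (stdOrthonormalBasis ℝ V).reindex (finCongr hV)
  have hBij : ∀ i j : Fin 4, ⟪(B i : E7), (B j : E7)⟫ = if i = j then 1 else 0 := by
    intro i j
    rw [← Submodule.coe_inner]
    exact orthonormal_iff_ite.mp B.orthonormal i j
  set u : E7 := (B 0 : E7) with hu_def
  set v : E7 := (B 1 : E7) with hv_def
  set w : E7 := (B 2 : E7) with hw_def
  have hu : ⟪u,u⟫ = 1 := by simpa using hBij 0 0
  have hv : ⟪v,v⟫ = 1 := by simpa using hBij 1 1
  have hw : ⟪w,w⟫ = 1 := by simpa using hBij 2 2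
  have huv : ⟪u,v⟫ = 0 := by simpa using hBij 0 1
  have huw : ⟪u,w⟫ = 0 := by simpa using hBij 0 2
  have hvw : ⟪v,w⟫ = 0 := by simpa using hBij 1 2
  have humem : u ∈ V := (B 0).2
  have hvmem : v ∈ V := (B 1).2
  have hwmem : w ∈ V := (B 2).2
  have hfu : ⟪cross u v, w⟫ = 0 := by
    rw [← phi0_eq]; exact hVphi _ _ _ humem hvmem hwmem
  obtain ⟨f, honf, htab, hf0, hf1, hf2, hf3, hf4, hf5, hf6⟩ :=
    cayley u v w hu hv hw huv huw hvw hfu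
  have hgram := orthonormal_iff_ite.mp honf
  -- the first three vectors are orthogonal to V
  have hperp : ∀ i : Fin 3, f (Fin.castAdd 4 i) ∈ Vᗮ := by
    have h0 : ∀ x y : E7, (∀ z ∈ V, phi0 x y z = 0) → cross x y ∈ Vᗮ := by
      intro x y h
      rw [Submodule.mem_orthogonal]
      intro z hz
      rw [real_inner_comm, ← phi0_eq]
      exact h z hz
    refine Fin3_forall ?_ ?_ ?_
    · show f 0 ∈ Vᗮ
      rw [hf0]
      exact h0 u v fun z hz => hVphi _ _ _ humem hvmem hz
    · show f 1 ∈ Vᗮ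
      rw [hf1]
      exact h0 u w fun z hz => hVphi _ _ _ humem hwmem hz
    · show f 2 ∈ Vᗮ
      rw [hf2]
      exact Vᗮ.neg_mem (h0 v w fun z hz => hVphi _ _ _ hvmem hwmem hz)
  -- Vᗮ is the span of those three vectors
  set K : Submodule ℝ E7 := Submodule.span ℝ (Set.range fun i : Fin 3 => f (Fin.castAdd 4 i))
    with hK_def
  have hKle : K ≤ Vᗮ := Submodule.span_le.mpr (by rintro x ⟨i, rfl⟩; exact hperp i)
  have honf3 : Orthonormal ℝ (fun i : Fin 3 => f (Fin.castAdd 4 i)) :=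
    honf.comp _ (Fin.castAdd_injective _ _)
  have hKrank : Module.finrank ℝ K = 3 := by
    rw [hK_def, finrank_span_eq_card honf3.linearIndependent, Fintype.card_fin]
  have hVperprank : Module.finrank ℝ Vᗮ = 3 := by
    have h := Submodule.finrank_add_finrank_orthogonal V
    rw [hV, finrank_euclideanSpace_fin] at h
    omega
  have hKeq : K = Vᗮ := Submodule.eq_of_le_of_finrank_le hKle (by rw [hKrank, hVperprank])
  -- hence the last vector lies in V
  have hm6 : f 6 ∈ V := by
    rw [← V.orthogonal_orthogonal, ← hKeq, Submodule.mem_orthogonal]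
    intro z hz
    refine Submodule.span_induction (fun x hx => ?_) (inner_zero_left _) ?_ ?_ hz
    · obtain ⟨i, rfl⟩ := hx
      have h := hgram (Fin.castAdd 4 i) 6
      rwa [if_neg (by intro hc; have := congrArg Fin.val hc; simp [Fin.castAdd] at this; omega)] at h
    · intro x y hx hy h1 h2
      rw [inner_add_left, h1, h2, add_zero]
    · intro a x hx h1
      rw [real_inner_smul_left, h1, mul_zero]
  have hm3 : f 3 ∈ V := by rw [hf3]; exact humem
  have hm4 : f 4 ∈ V := by rw [hf4]; exact hvmem
  have hm5 : f 5 ∈ V := by rw [hf5]; exact hwmem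
  -- V is the span of the last four vectors
  have honf4 : Orthonormal ℝ (fun i : Fin 4 => f (Fin.natAdd 3 i)) :=
    honf.comp _ (fun i j hij => by
      have := congrArg Fin.val hij
      simp [Fin.natAdd] at this
      exact Fin.ext this)
  have hle4 : Submodule.span ℝ (Set.range fun i : Fin 4 => f (Fin.natAdd 3 i)) ≤ V := by
    refine Submodule.span_le.mpr ?_
    rintro x ⟨i, rfl⟩
    fin_cases i
    · exact hm3
    · exact hm4
    · exact hm5
    · exact hm6
  have hrank4 : Module.finrank ℝ
      (Submodule.span ℝ (Set.range fun i : Fin 4 => f (Fin.natAdd 3 i))) = 4 := by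
    rw [finrank_span_eq_card honf4.linearIndependent, Fintype.card_fin]
  exact ⟨f, honf, htab,
    (Submodule.eq_of_le_of_finrank_le hle4 (by rw [hV, hrank4])).symm⟩

/-- G₂ acts transitively on coassociative 4-planes: any two 4-dimensional subspaces of ℝ⁷ on
which φ₀ vanishes identically are related by an invertible linear map preserving φ₀. -/
theorem g2_transitive_on_coassociative_planes
    (V W : Submodule ℝ E7)
    (hV : Module.finrank ℝ V = 4) (hW : Module.finrank ℝ W = 4)
    (hVphi : ∀ u v w : E7, u ∈ V → v ∈ V → w ∈ V → phi0 u v w = 0)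
    (hWphi : ∀ u v w : E7, u ∈ W → v ∈ W → w ∈ W → phi0 u v w = 0) :
    ∃ A : E7 →ₗ[ℝ] E7, Function.Bijective A ∧
      (∀ x y z : E7, phi0 (A x) (A y) (A z) = phi0 x y z) ∧
      V.map A = W := by
  classical
  obtain ⟨f, hof, htf, hVs⟩ := cayley_subspace V hV hVphi
  obtain ⟨g, hog, htg, hWs⟩ := cayley_subspace W hW hWphi
  have hcard : Fintype.card (Fin 7) = Module.finrank ℝ E7 := by
    simp [finrank_euclideanSpace_fin]
  let Bf : Module.Basis (Fin 7) ℝ E7 :=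
    basisOfLinearIndependentOfCardEqFinrank hof.linearIndependent hcard
  let Bg : Module.Basis (Fin 7) ℝ E7 :=
    basisOfLinearIndependentOfCardEqFinrank hog.linearIndependent hcard
  have hBf : ⇑Bf = f := coe_basisOfLinearIndependentOfCardEqFinrank _ _
  have hBg : ⇑Bg = g := coe_basisOfLinearIndependentOfCardEqFinrank _ _
  set A : E7 →ₗ[ℝ] E7 := Bf.constr ℝ g with hA_def
  set A' : E7 →ₗ[ℝ] E7 := Bg.constr ℝ f with hA'_def
  have hA : ∀ i, A (f i) = g i := by
    intro i
    rw [← hBf, hA_def]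
    exact Bf.constr_basis ℝ g i
  have hA' : ∀ i, A' (g i) = f i := by
    intro i
    rw [← hBg, hA'_def]
    exact Bg.constr_basis ℝ f i
  have hcomp1 : ∀ x, A' (A x) = x := by
    have h : A'.comp A = LinearMap.id := by
      refine Bf.ext fun i => ?_
      rw [hBf, LinearMap.comp_apply, hA i, hA' i, LinearMap.id_apply]
    intro x
    have := LinearMap.congr_fun h x
    simpa using this
  have hcomp2 : ∀ x, A (A' x) = x := by
    have h : A.comp A' = LinearMap.id := by
      refine Bg.ext fun i => ?_
      rw [hBg, LinearMap.comp_apply, hA' i, hA i, LinearMap.id_apply]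
    intro x
    have := LinearMap.congr_fun h x
    simpa using this
  have hbij : Function.Bijective A :=
    ⟨fun x y hxy => by rw [← hcomp1 x, ← hcomp1 y, hxy],
     fun y => ⟨A' y, hcomp2 y⟩⟩
  have expand : ∀ x : E7, x = ∑ i, Bf.repr x i • f i := by
    intro x
    conv_rhs => rw [← hBf]
    exact (Bf.sum_repr x).symm
  have hAx : ∀ x : E7, A x = ∑ i, Bf.repr x i • g i := by
    intro x
    conv_lhs => rw [expand x]
    rw [map_sum]
    exact Finset.sum_congr rfl fun i _ => by rw [map_smul, hA]
  refine ⟨A, hbij, ?_, ?_⟩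
  · intro x y z
    conv_rhs => rw [expand x, expand y, expand z]
    rw [hAx x, hAx y, hAx z, phi0_expand_sum, phi0_expand_sum]
    simp only [htf, htg]
  · rw [hVs, Submodule.map_span, hWs]
    congr 1
    rw [← Set.range_comp]
    have h : (⇑A ∘ fun i : Fin 4 => f (Fin.natAdd 3 i))
        = fun i : Fin 4 => g (Fin.natAdd 3 i) := funext fun i => hA _
    rw [h]
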